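/- Let b ∈ ℕ^n be nonincreasing and r ∈ ℕ^m. Define V = {b + x : x ∈ ℕ^n, x ≺ r*}, the attainable set of the valley-filling problem. If v ∈ V, then the nonincreasing rearrangement v↓ is also in V. -/

import Mathlib

open Finset

/-- Nondecreasing rearrangement of a finite vector. -/
def sortAsc {n : ℕ} {α : Type*} [LinearOrder α] (x : Fin n → α) : Fin n → α :=
  x ∘ Tuple.sort x

/-- Nonincreasing rearrangement of a finite vector. -/
def sortDesc {n : ℕ} {α : Type*} [LinearOrder α] (x : Fin n → α) : Fin n → α :=
  fun i => sortAsc x i.rev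

/-- Sum of the entries of `f` at positions `< k`. -/
def psum {n : ℕ} {α : Type*} [AddCommMonoid α] (f : Fin n → α) (k : ℕ) : α :=
  ∑ i : Fin n, if (i : ℕ) < k then f i else 0

/-- `x` is majorized by `y`: every partial sum of the `k` largest entries of `x`
is at most that of `y`, and the total sums agree. -/
def Maj {n : ℕ} {α : Type*} [AddCommMonoid α] [LinearOrder α] [IsOrderedAddMonoid α] (x y : Fin n → α) : Prop :=
  (∀ k : ℕ, psum (sortDesc x) k ≤ psum (sortDesc y) k) ∧ (∑ i, x i) = ∑ i, y i

/-- Weak submajorization: the sum of the `k` largest entries of `x` is at most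
that of `y`, for every `k`. -/
def WeakSub {n : ℕ} {α : Type*} [AddCommMonoid α] [LinearOrder α] [IsOrderedAddMonoid α] (x y : Fin n → α) : Prop :=
  ∀ k : ℕ, psum (sortDesc x) k ≤ psum (sortDesc y) k

/-- Weak supermajorization: the sum of the `k` smallest entries of `x` is at least
that of `y`, for every `k`. -/
def WeakSuper {n : ℕ} {α : Type*} [AddCommMonoid α] [LinearOrder α] [IsOrderedAddMonoid α] (x y : Fin n → α) : Prop :=
  ∀ k : ℕ, psum (sortAsc y) k ≤ psum (sortAsc x) k

/-- Partition conjugate of `r ∈ ℕ^m`, taken with dimension `n`: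
its `j`-th entry (1-indexed `j+1`) counts the indices `i` with `r i ≥ j+1`. -/
def conj {m : ℕ} (r : Fin m → ℕ) (n : ℕ) : Fin n → ℕ :=
  fun j => (Finset.univ.filter fun i => (j : ℕ) + 1 ≤ r i).card

/-!
If `v = b + x` is not nonincreasing, pick `i < j` with `v i < v j` and swap these two entries
of `v`. The new excess `y = v ∘ swap i j - b` agrees with `x` off `{i, j}`, has the same sum
`x i + x j` on `{i, j}`, and both `y i = v j - b i` and `y j = v i - b j` are at most
`x j = v j - b j` because `b j ≤ b i ≤ v i < v j`. So `y` arises from `x` by moving mass from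
the larger entry to the smaller one, hence `y ≺ x`, and `y ≺ r*` by transitivity. Each swap
strictly decreases `∑ l, l * v l`, so finitely many of them reach the nonincreasing
rearrangement of `v`.
-/

namespace Finset

lemma sum_le_sum_of_card_le_of_forall_le {ι : Type*} {s t : Finset ι} {w : ι → ℕ}
    (hcard : #s ≤ #t) (hw : ∀ a ∈ s, ∀ b ∈ t, w a ≤ w b) : ∑ a ∈ s, w a ≤ ∑ b ∈ t, w b := by
  obtain rfl | ht := t.eq_empty_or_nonempty
  · simp_all
  obtain ⟨b₀, hb₀, hmin⟩ := t.exists_min_image w ht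
  calc ∑ a ∈ s, w a ≤ #s • w b₀ := sum_le_card_nsmul _ _ _ fun a ha => hw a ha b₀ hb₀
    _ ≤ #t • w b₀ := by gcongr
    _ ≤ ∑ b ∈ t, w b := card_nsmul_le_sum _ _ _ hmin

lemma sum_eq_sum_of_eq_off_pair {ι M : Type*} [DecidableEq ι] [AddCommMonoid M]
    {x y : ι → M} {i j : ι} {s : Finset ι} (hi : i ∈ s) (hj : j ∈ s) (hij : i ≠ j)
    (hy : ∀ l, l ≠ i → l ≠ j → y l = x l) (hsum : y i + y j = x i + x j) :
    ∑ l ∈ s, y l = ∑ l ∈ s, x l := by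
  have hpair : {i, j} ⊆ s := insert_subset hi (singleton_subset_iff.mpr hj)
  rw [← sum_sdiff hpair, ← sum_sdiff hpair (f := x), sum_pair hij, sum_pair hij, hsum]
  congr 1
  refine sum_congr rfl fun l hl => ?_
  simp only [mem_sdiff, mem_insert, mem_singleton, not_or] at hl
  exact hy l hl.2.1 hl.2.2

end Finset

section Rearrangement

variable {n : ℕ} {α : Type*} [LinearOrder α]

lemma exists_perm_sortDesc_eq_comp (y : Fin n → α) :
    ∃ σ : Equiv.Perm (Fin n), sortDesc y = y ∘ σ :=
  ⟨Fin.revPerm.trans (Tuple.sort y), rfl⟩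

lemma antitone_sortDesc (y : Fin n → α) : Antitone (sortDesc y) :=
  fun _ _ hij => Tuple.monotone_sort y (Fin.rev_le_rev.mpr hij)

lemma sortDesc_comp_perm (y : Fin n → α) (σ : Equiv.Perm (Fin n)) :
    sortDesc (y ∘ σ) = sortDesc y := by
  funext i
  exact congrFun (Tuple.comp_perm_comp_sort_eq_comp_sort (f := y) (σ := σ)) i.rev

lemma sortDesc_eq_self_of_antitone {y : Fin n → α} (hy : Antitone y) : sortDesc y = y :=
  Tuple.unique_antitone (σ := Fin.revPerm.trans (Tuple.sort y)) (τ := Equiv.refl _)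
    (antitone_sortDesc y) hy

end Rearrangement

section Majorization

variable {n : ℕ}

lemma psum_eq_sum_filter {α : Type*} [AddCommMonoid α] (f : Fin n → α) (k : ℕ) :
    psum f k = ∑ i ∈ univ.filter (fun i : Fin n => (i : ℕ) < k), f i :=
  (sum_filter _ _).symm

lemma sum_le_psum_of_antitone {w : Fin n → ℕ} (hw : Antitone w) {s : Finset (Fin n)} {k : ℕ}
    (hs : #s ≤ k) : ∑ i ∈ s, w i ≤ psum w k := by
  set t := univ.filter (fun i : Fin n => (i : ℕ) < k)
  have hst : #s ≤ #t := by
    rw [Fin.card_filter_val_lt]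
    exact le_min (card_le_univ s |>.trans_eq (Fintype.card_fin n)) hs
  rw [psum_eq_sum_filter, ← sum_inter_add_sum_sdiff s t, ← sum_inter_add_sum_sdiff t s,
    inter_comm]
  gcongr 1
  refine Finset.sum_le_sum_of_card_le_of_forall_le (card_sdiff_le_card_sdiff_iff.mpr hst) ?_
  intro a ha b hb
  simp only [t, mem_sdiff, mem_filter, mem_univ, true_and] at ha hb
  exact hw (Fin.le_def.mpr (by omega))

lemma sum_le_psum_sortDesc (y : Fin n → ℕ) {s : Finset (Fin n)} {k : ℕ} (hs : #s ≤ k) :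
    ∑ i ∈ s, y i ≤ psum (sortDesc y) k := by
  obtain ⟨σ, hσ⟩ := exists_perm_sortDesc_eq_comp y
  calc ∑ i ∈ s, y i = ∑ i ∈ s.map σ.symm.toEmbedding, sortDesc y i := by simp [hσ]
    _ ≤ psum (sortDesc y) k := sum_le_psum_of_antitone (antitone_sortDesc y) (by simpa)

lemma exists_psum_sortDesc_eq_sum (y : Fin n → ℕ) (k : ℕ) :
    ∃ s : Finset (Fin n), #s ≤ k ∧ psum (sortDesc y) k = ∑ i ∈ s, y i := by
  obtain ⟨σ, hσ⟩ := exists_perm_sortDesc_eq_comp y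
  refine ⟨(univ.filter fun i : Fin n => (i : ℕ) < k).map σ.toEmbedding, ?_, ?_⟩
  · simp [Fin.card_filter_val_lt]
  · simp [psum_eq_sum_filter, hσ]

lemma weakSub_of_forall_exists_sum_le {x y : Fin n → ℕ}
    (h : ∀ s : Finset (Fin n), ∃ t : Finset (Fin n), #t ≤ #s ∧ ∑ i ∈ s, y i ≤ ∑ i ∈ t, x i) :
    WeakSub y x := by
  intro k
  obtain ⟨s, hs, hys⟩ := exists_psum_sortDesc_eq_sum y k
  obtain ⟨t, ht, hst⟩ := h s
  exact hys ▸ hst.trans (sum_le_psum_sortDesc x (ht.trans hs))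

lemma Maj.trans {x y z : Fin n → ℕ} (hxy : Maj x y) (hyz : Maj y z) : Maj x z :=
  ⟨fun k => (hxy.1 k).trans (hyz.1 k), hxy.2.trans hyz.2⟩

lemma maj_of_transfer {x y : Fin n → ℕ} {i j : Fin n} (hij : i ≠ j)
    (hy : ∀ l, l ≠ i → l ≠ j → y l = x l) (hsum : y i + y j = x i + x j)
    (hi : y i ≤ x j) (hj : y j ≤ x j) : Maj y x := by
  refine ⟨weakSub_of_forall_exists_sum_le fun s => ?_,
    Finset.sum_eq_sum_of_eq_off_pair (mem_univ i) (mem_univ j) hij hy hsum⟩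
  have hle : ∀ l, l ≠ i → y l ≤ x l := fun l hli =>
    if hlj : l = j then hlj ▸ hj else (hy l hli hlj).le
  by_cases his : i ∈ s
  · by_cases hjs : j ∈ s
    · exact ⟨s, le_rfl, (Finset.sum_eq_sum_of_eq_off_pair his hjs hij hy hsum).le⟩
    · refine ⟨s.map (Equiv.swap i j).toEmbedding, (card_map _).le, ?_⟩
      rw [sum_map]
      refine sum_le_sum fun l hl => ?_
      by_cases hli : l = i
      · simpa [hli] using hi
      · have hlj : l ≠ j := ne_of_mem_of_not_mem hl hjs
        simpa [Equiv.swap_apply_of_ne_of_ne hli hlj] using hle l hli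
  · exact ⟨s, le_rfl, sum_le_sum fun l hl => hle l (ne_of_mem_of_not_mem hl his)⟩

end Majorization

section Swap

variable {n : ℕ}

lemma exists_maj_comp_swap {b x : Fin n → ℕ} (hb : Antitone b) {i j : Fin n} (hij : i < j)
    (hlt : b i + x i < b j + x j) :
    ∃ y, Maj y x ∧ (fun l => b l + x l) ∘ Equiv.swap i j = fun l => b l + y l := by
  have hbij : b j ≤ b i := hb hij.le
  have hb_le : ∀ l, b l ≤ b (Equiv.swap i j l) + x (Equiv.swap i j l) := by
    intro l
    rcases eq_or_ne l i with rfl | hli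
    · simp only [Equiv.swap_apply_left]; omega
    rcases eq_or_ne l j with rfl | hlj
    · simp only [Equiv.swap_apply_right]; omega
    simp [Equiv.swap_apply_of_ne_of_ne hli hlj]
  refine ⟨fun l => b (Equiv.swap i j l) + x (Equiv.swap i j l) - b l,
    maj_of_transfer hij.ne (fun l hli hlj => ?_) ?_ ?_ ?_, funext fun l => ?_⟩
  · simp [Equiv.swap_apply_of_ne_of_ne hli hlj]
  · simp only [Equiv.swap_apply_left, Equiv.swap_apply_right]; omega
  · simp only [Equiv.swap_apply_left]; omega
  · simp only [Equiv.swap_apply_right]; omega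
  · have := hb_le l
    simp only [Function.comp_apply]; omega

lemma sum_mul_comp_swap_lt {v : Fin n → ℕ} {i j : Fin n} (hij : i < j) (hlt : v i < v j) :
    ∑ l : Fin n, (l : ℕ) * (v ∘ Equiv.swap i j) l < ∑ l : Fin n, (l : ℕ) * v l := by
  rw [← Equiv.sum_comp (Equiv.swap i j)]
  simp only [Function.comp_apply, Equiv.swap_apply_self]
  have hdiff : ∑ l, (((Equiv.swap i j l : Fin n) : ℕ) * v l - (l : ℕ) * v l : ℤ)
      = ((j : ℤ) - i) * (v i - v j) := by
    rw [Fintype.sum_eq_add i j hij.ne fun l hl => by simp [Equiv.swap_apply_of_ne_of_ne hl.1 hl.2]]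
    simp only [Equiv.swap_apply_left, Equiv.swap_apply_right]
    ring
  have hneg : ((j : ℤ) - i) * (v i - v j) < 0 :=
    mul_neg_of_pos_of_neg (by simpa using hij) (by simpa using hlt)
  rw [sum_sub_distrib] at hdiff
  zify
  omega

theorem exists_sortDesc_eq_add {b c : Fin n → ℕ} (hb : Antitone b) (v : Fin n → ℕ)
    (hv : ∃ x, Maj x c ∧ v = fun i => b i + x i) :
    ∃ x, Maj x c ∧ sortDesc v = fun i => b i + x i := by
  obtain ⟨x, hxc, rfl⟩ := hv
  by_cases hanti : Antitone fun i => b i + x i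
  · exact ⟨x, hxc, sortDesc_eq_self_of_antitone hanti⟩
  obtain ⟨i, j, hij, hlt⟩ : ∃ i j, i < j ∧ b i + x i < b j + x j := by
    simp only [Antitone, not_forall, not_le, exists_prop] at hanti
    obtain ⟨i, j, hij, hlt⟩ := hanti
    exact ⟨i, j, hij.lt_of_ne (by rintro rfl; exact hlt.false), hlt⟩
  obtain ⟨y, hyx, hswap⟩ := exists_maj_comp_swap hb hij hlt
  have := exists_sortDesc_eq_add hb ((fun l => b l + x l) ∘ Equiv.swap i j)
    ⟨y, Maj.trans hyx hxc, hswap⟩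
  rwa [sortDesc_comp_perm] at this
termination_by ∑ l : Fin n, (l : ℕ) * v l
decreasing_by
  subst_vars
  exact sum_mul_comp_swap_lt hij hlt

end Swap

theorem stmt_17_general {m n : ℕ} (b : Fin n → ℕ) (hb : Antitone b)
    (r : Fin m → ℕ) (v : Fin n → ℕ)
    (hv : ∃ x : Fin n → ℕ, Maj x (conj r n) ∧ v = fun i => b i + x i) :
    ∃ x : Fin n → ℕ, Maj x (conj r n) ∧ sortDesc v = fun i => b i + x i :=
  exists_sortDesc_eq_add hb v hv

theorem stmt_17 {m n : ℕ} (b : Fin n → ℕ) (hb : Antitone b)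
    (r : Fin m → ℕ) (hr : ∀ i, r i ≤ n) (v : Fin n → ℕ)
    (hv : ∃ x : Fin n → ℕ, Maj x (conj r n) ∧ v = fun i => b i + x i) :
    ∃ x : Fin n → ℕ, Maj x (conj r n) ∧ sortDesc v = fun i => b i + x i :=
  stmt_17_general b hb r v hv
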